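/- For an exponential random variable G with rate λ > 0 and constants a > 0, P > 0, the expectation E[log(1 + a + P*G)] − E[log(1 + P*G)] can be expressed using the exponential integral: E[log((1+a+P*G)/(1+P*G))] = e^{λ(1+a)/P} Ei(λ(1+a)/P) − e^{λ/P} Ei(λ/P) + log((1+a)/1), where Ei(x) = ∫_x^∞ e^{-t}/t dt. Formally: ∫_0^∞ λ e^{-λ g} log((1+a+P g)/(1+P g)) dg = log(1+a) + e^{λ(1+a)/P} Ei(λ(1+a)/P) − e^{λ/P} Ei(λ/P). -/

import Mathlib

open MeasureTheory Real Set Filter Topology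

/-- The exponential integral `Ei(x) = ∫_x^∞ e^{-t}/t dt` (usually denoted `E₁`). -/
noncomputable def Ei (x : ℝ) : ℝ := ∫ t in Set.Ioi x, Real.exp (-t) / t

lemma int_mul_exp {lam : ℝ} (hlam : 0 < lam) :
    IntegrableOn (fun g : ℝ => g * Real.exp (-(lam * g))) (Ioi 0) := by
  have h : IntegrableOn (fun x : ℝ => Real.exp (-x) * x ^ ((2:ℝ) - 1)) (Ioi 0) :=
    Real.GammaIntegral_convergent (by norm_num)
  have h2 := (integrableOn_Ioi_comp_mul_left_iff
      (fun x : ℝ => Real.exp (-x) * x ^ ((2:ℝ) - 1)) 0 hlam).mpr (by simpa using h)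
  have h3 : IntegrableOn (fun x : ℝ => lam⁻¹ *
      (Real.exp (-(lam * x)) * (lam * x) ^ ((2:ℝ) - 1))) (Ioi 0) := h2.const_mul _
  refine h3.congr_fun (fun x hx => ?_) measurableSet_Ioi
  have hx0 : (0:ℝ) < x := hx
  dsimp only
  rw [show ((2:ℝ) - 1) = 1 by norm_num, Real.rpow_one]
  field_simp

lemma key_int {lam P c : ℝ} (hlam : 0 < lam) (hP : 0 < P) (hc : 0 < c) :
    IntegrableOn (fun g : ℝ => lam * Real.exp (-lam * g) * Real.log (c + P * g)) (Ioi 0) ∧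
    ∫ g in Set.Ioi (0:ℝ), lam * Real.exp (-lam * g) * Real.log (c + P * g)
      = Real.log c + Real.exp (lam * c / P) * Ei (lam * c / P) := by
  have hpos : ∀ x : ℝ, 0 ≤ x → 0 < c + P * x := fun x hx => by positivity
  -- log bound : |log (c + P x)| ≤ |log c| + (P/c) * x for x ≥ 0
  have hlog : ∀ x : ℝ, 0 ≤ x → |Real.log (c + P * x)| ≤ |Real.log c| + (P / c) * x := by
    intro x hx
    have h1 : c + P * x = c * (1 + P * x / c) := by field_simp
    have h2 : (0:ℝ) < 1 + P * x / c := by positivity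
    rw [h1, Real.log_mul hc.ne' h2.ne']
    calc |Real.log c + Real.log (1 + P * x / c)|
        ≤ |Real.log c| + |Real.log (1 + P * x / c)| := abs_add_le _ _
      _ ≤ |Real.log c| + (P / c) * x := by
          gcongr
          rw [abs_of_nonneg (Real.log_nonneg (by nlinarith [mul_nonneg (mul_nonneg hP.le hx) (inv_nonneg.mpr hc.le)]))]
          have := Real.log_le_sub_one_of_pos h2
          calc Real.log (1 + P * x / c) ≤ (1 + P * x / c) - 1 := this
            _ = (P / c) * x := by ring
  -- integrability of the main integrand
  have intA : IntegrableOn (fun g : ℝ => lam * Real.exp (-lam * g) * Real.log (c + P * g))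
      (Ioi 0) := by
    have hdom : IntegrableOn (fun g : ℝ =>
        lam * |Real.log c| * Real.exp (-lam * g) +
        lam * (P / c) * (g * Real.exp (-(lam * g)))) (Ioi 0) :=
      (((exp_neg_integrableOn_Ioi 0 hlam).const_mul _)).add ((int_mul_exp hlam).const_mul _)
    refine Integrable.mono' hdom ?_ ?_
    · apply ContinuousOn.aestronglyMeasurable ?_ measurableSet_Ioi
      apply ContinuousOn.mul (by fun_prop)
      apply ContinuousOn.log (by fun_prop)
      intro x hx
      exact (hpos x (le_of_lt hx)).ne'
    · filter_upwards [ae_restrict_mem measurableSet_Ioi] with x hx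
      have hx0 : (0:ℝ) < x := hx
      have hexp : (0:ℝ) < Real.exp (-lam * x) := Real.exp_pos _
      rw [norm_mul, norm_mul, Real.norm_eq_abs, Real.norm_eq_abs, Real.norm_eq_abs,
        abs_of_pos hlam, abs_of_pos hexp]
      calc lam * Real.exp (-lam * x) * |Real.log (c + P * x)|
          ≤ lam * Real.exp (-lam * x) * (|Real.log c| + (P / c) * x) := by
            gcongr; exact hlog x hx0.le
        _ = lam * |Real.log c| * Real.exp (-lam * x) +
            lam * (P / c) * (x * Real.exp (-(lam * x))) := by
            rw [neg_mul]; ring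
  -- integrability of the boundary-term derivative piece
  have intB : IntegrableOn (fun g : ℝ => P * Real.exp (-lam * g) / (c + P * g)) (Ioi 0) := by
    refine Integrable.mono' (((exp_neg_integrableOn_Ioi 0 hlam).const_mul (P / c))) ?_ ?_
    · apply ContinuousOn.aestronglyMeasurable ?_ measurableSet_Ioi
      apply ContinuousOn.div (by fun_prop) (by fun_prop)
      intro x hx
      exact (hpos x (le_of_lt hx)).ne'
    · filter_upwards [ae_restrict_mem measurableSet_Ioi] with x hx
      have hx0 : (0:ℝ) < x := hx
      have hcx : (0:ℝ) < c + P * x := hpos x hx0.le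
      rw [Real.norm_eq_abs, abs_div, abs_of_pos hcx,
        abs_of_pos (by positivity : (0:ℝ) < P * Real.exp (-lam * x))]
      calc P * Real.exp (-lam * x) / (c + P * x) ≤ P * Real.exp (-lam * x) / c := by
            gcongr
            nlinarith [mul_pos hP hx0]
        _ = P / c * Real.exp (-lam * x) := by ring
  -- derivative of F g = -(exp(-lam g) * log (c + P g))
  have hderiv : ∀ x : ℝ, 0 ≤ x →
      HasDerivAt (fun g : ℝ => -(Real.exp (-lam * g) * Real.log (c + P * g)))
        (lam * Real.exp (-lam * x) * Real.log (c + P * x)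
          - P * Real.exp (-lam * x) / (c + P * x)) x := by
    intro x hx
    have hcx : (0:ℝ) < c + P * x := hpos x hx
    have h1 : HasDerivAt (fun g : ℝ => Real.exp (-lam * g)) (Real.exp (-lam * x) * (-lam)) x := by
      simpa using ((hasDerivAt_id x).const_mul (-lam)).exp
    have h2 : HasDerivAt (fun g : ℝ => Real.log (c + P * g)) (P / (c + P * x)) x := by
      have : HasDerivAt (fun g : ℝ => c + P * g) P x := by
        exact ((hasDerivAt_const x c).add ((hasDerivAt_id x).const_mul P)).congr_deriv (by simp)
      simpa using this.log hcx.ne'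
    have := (h1.mul h2).neg
    exact this.congr_deriv (by ring)
  -- continuity at 0 from the left-closed side
  have hcont : ContinuousWithinAt (fun g : ℝ => -(Real.exp (-lam * g) * Real.log (c + P * g)))
      (Ici 0) 0 := ((hderiv 0 le_rfl).continuousAt).continuousWithinAt
  -- limit at infinity is 0
  have htend : Tendsto (fun g : ℝ => -(Real.exp (-lam * g) * Real.log (c + P * g)))
      atTop (𝓝 0) := by
    rw [tendsto_zero_iff_norm_tendsto_zero]
    have hbound : Tendsto (fun g : ℝ =>
        |Real.log c| * Real.exp (-lam * g) + (P / c) * (g * Real.exp (-(lam * g))))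
        atTop (𝓝 0) := by
      have t1 : Tendsto (fun g : ℝ => Real.exp (-lam * g)) atTop (𝓝 0) := by
        simp_rw [neg_mul, Real.exp_neg]
        exact (tendsto_exp_atTop.comp (tendsto_id.const_mul_atTop hlam)).inv_tendsto_atTop
      have t2 : Tendsto (fun g : ℝ => g * Real.exp (-(lam * g))) atTop (𝓝 0) := by
        have base : Tendsto (fun y : ℝ => lam⁻¹ * (y ^ (1:ℕ) * Real.exp (-y))) atTop
            (𝓝 (lam⁻¹ * 0)) :=
          (tendsto_pow_mul_exp_neg_atTop_nhds_zero 1).const_mul _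
        have comp := base.comp (tendsto_id.const_mul_atTop hlam (f := fun x : ℝ => x))
        rw [mul_zero] at comp
        refine comp.congr (fun x => ?_)
        simp only [Function.comp, pow_one, id]
        field_simp
      have := (t1.const_mul (|Real.log c|)).add (t2.const_mul (P / c))
      simpa using this
    refine squeeze_zero' ?_ ?_ hbound
    · filter_upwards with x using norm_nonneg _
    · filter_upwards [eventually_ge_atTop 0] with x hx
      have hexp : (0:ℝ) < Real.exp (-lam * x) := Real.exp_pos _
      rw [norm_neg, norm_mul, Real.norm_eq_abs, Real.norm_eq_abs, abs_of_pos hexp]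
      calc Real.exp (-lam * x) * |Real.log (c + P * x)|
          ≤ Real.exp (-lam * x) * (|Real.log c| + (P / c) * x) := by
            gcongr; exact hlog x hx
        _ = |Real.log c| * Real.exp (-lam * x) + (P / c) * (x * Real.exp (-(lam * x))) := by
            rw [neg_mul]; ring
  -- FTC on Ioi
  have hFTC := integral_Ioi_of_hasDerivAt_of_tendsto hcont
      (fun x hx => hderiv x (le_of_lt hx)) (intA.sub intB) htend
  simp only [mul_zero, add_zero, Real.exp_zero, one_mul, zero_sub, neg_neg] at hFTC
  -- hFTC : ∫ x in Ioi 0, (f1 - f2) = exp 0 * log (c + P * 0) = log c   (after simp)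
  have hsplit : ∫ x in Set.Ioi (0:ℝ), (lam * Real.exp (-lam * x) * Real.log (c + P * x)
      - P * Real.exp (-lam * x) / (c + P * x)) =
      (∫ x in Set.Ioi (0:ℝ), lam * Real.exp (-lam * x) * Real.log (c + P * x))
      - ∫ x in Set.Ioi (0:ℝ), P * Real.exp (-lam * x) / (c + P * x) :=
    integral_sub intA intB
  -- change of variables for the Ei piece
  have hEi : ∫ x in Set.Ioi (0:ℝ), P * Real.exp (-lam * x) / (c + P * x)
      = Real.exp (lam * c / P) * Ei (lam * c / P) := by
    have himg : (fun x : ℝ => lam * c / P + lam * x) '' Ioi 0 = Ioi (lam * c / P) := by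
      have : (fun x : ℝ => lam * c / P + lam * x) =
          (fun y : ℝ => lam * c / P + y) ∘ (fun x : ℝ => lam * x) := rfl
      rw [this, Set.image_comp, image_const_mul_Ioi_zero hlam, Set.image_const_add_Ioi, add_zero]
    have hCoV := integral_image_eq_integral_abs_deriv_smul (s := Ioi (0:ℝ)) (f := fun x : ℝ => lam * c / P + lam * x)
        (f' := fun _ : ℝ => lam) measurableSet_Ioi
        (fun x _ => ((hasDerivAt_const x _).add ((hasDerivAt_id x).const_mul lam)).hasDerivWithinAt.congr_deriv (by simp))
        (fun x _ y _ h => by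
          have : lam * x = lam * y := by linarith [h]
          exact mul_left_cancel₀ hlam.ne' this)
        (fun t : ℝ => Real.exp (-t) / t)
    rw [himg] at hCoV
    have : Ei (lam * c / P) = ∫ x in Set.Ioi (0:ℝ),
        Real.exp (-lam * c / P) * (P * Real.exp (-lam * x) / (c + P * x)) := by
      rw [Ei, hCoV]
      refine setIntegral_congr_fun measurableSet_Ioi (fun x hx => ?_)
      have hx0 : (0:ℝ) < x := hx
      have hcx : (0:ℝ) < c + P * x := hpos x hx0.le
      rw [smul_eq_mul, abs_of_pos hlam]
      rw [show -(lam * c / P + lam * x) = -lam * c / P + -lam * x by ring, Real.exp_add]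
      have harg : lam * c / P + lam * x = lam / P * (c + P * x) := by field_simp
      rw [harg]
      field_simp
    rw [this, MeasureTheory.integral_const_mul, ← mul_assoc, ← Real.exp_add,
      show lam * c / P + -lam * c / P = 0 by ring]
    simp
  refine ⟨intA, ?_⟩
  have : (∫ x in Set.Ioi (0:ℝ), lam * Real.exp (-lam * x) * Real.log (c + P * x))
      - ∫ x in Set.Ioi (0:ℝ), P * Real.exp (-lam * x) / (c + P * x) = Real.log c := by
    rw [← hsplit, hFTC]
  rw [hEi] at this
  linarith

theorem stmt13 (lam a P : ℝ) (hlam : 0 < lam) (ha : 0 < a) (hP : 0 < P) :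
    ∫ g in Set.Ioi (0 : ℝ),
        lam * Real.exp (-lam * g) * Real.log ((1 + a + P * g) / (1 + P * g)) =
      Real.log (1 + a) + Real.exp (lam * (1 + a) / P) * Ei (lam * (1 + a) / P) -
        Real.exp (lam / P) * Ei (lam / P) := by
  have ha' : (0:ℝ) < 1 + a := by linarith
  obtain ⟨intA, hA⟩ := key_int (c := 1 + a) hlam hP ha'
  obtain ⟨intB, hB⟩ := key_int (c := 1) hlam hP one_pos
  have hcong : ∫ g in Set.Ioi (0 : ℝ),
      lam * Real.exp (-lam * g) * Real.log ((1 + a + P * g) / (1 + P * g)) =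
      ∫ g in Set.Ioi (0 : ℝ),
        (lam * Real.exp (-lam * g) * Real.log (1 + a + P * g)
         - lam * Real.exp (-lam * g) * Real.log (1 + P * g)) := by
    refine setIntegral_congr_fun measurableSet_Ioi (fun x hx => ?_)
    have hx0 : (0:ℝ) < x := hx
    have h1 : (0:ℝ) < 1 + a + P * x := by positivity
    have h2 : (0:ℝ) < 1 + P * x := by positivity
    rw [Real.log_div h1.ne' h2.ne']
    ring
  rw [hcong, integral_sub intA intB, hA, hB]
  simp [Real.log_one, mul_one]
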